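/- Let a > 0 and R₁ = ψ(θ_x). If θ̄ ∈ (0, π/2) satisfies ψ(θ̄) = R₁, then θ̄ = θ_x and E₀(R₁,a) = E_U(R₁,a), i.e. (a/4)(1 − cos θ_x) + R_x − R₁ = (a/4)(1 − cos θ̄) − ln sin θ̄ − R₁. In particular R_x = −ln sin θ_x. -/

import Mathlib

open Real

/-- `R_x = (1/2)ln(1/2 + (1/2)√(1+a²/4))` for signal-to-noise ratio `a`. -/
noncomputable def Rx (a : ℝ) : ℝ := (1/2) * Real.log (1/2 + (1/2) * Real.sqrt (1 + a^2/4))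

/-- `θ_x = arccos √(1 − e^{−2R_x})`. -/
noncomputable def thetax (a : ℝ) : ℝ := Real.arccos (Real.sqrt (1 - Real.exp (-2 * Rx a)))

/-- `ψ(x) = −((1 − sin x)/(2 sin x))·ln((1 − sin x)/(1 + sin x)) − ln(2 sin x/(1 + sin x))`
(the Kabatiansky–Levenshtein rate function for spherical codes). -/
noncomputable def psi (x : ℝ) : ℝ :=
  -((1 - Real.sin x) / (2 * Real.sin x)) * Real.log ((1 - Real.sin x) / (1 + Real.sin x))
    - Real.log (2 * Real.sin x / (1 + Real.sin x))

lemma hasDerivAt_psi {x : ℝ} (hs0 : 0 < Real.sin x) (hs1 : Real.sin x < 1) :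
    HasDerivAt psi (Real.cos x * (Real.log ((1 - Real.sin x) / (1 + Real.sin x)))
      / (2 * Real.sin x ^ 2)) x := by
  set s := Real.sin x with hs
  have hs1' : (1 : ℝ) - s ≠ 0 := by linarith
  have hs1p : (0 : ℝ) < 1 + s := by linarith
  have hs0' : s ≠ 0 := ne_of_gt hs0
  have h2s : (2 : ℝ) * s ≠ 0 := by positivity
  have hsin : HasDerivAt Real.sin (Real.cos x) x := Real.hasDerivAt_sin x
  have hnum : HasDerivAt (fun y => 1 - Real.sin y) (-Real.cos x) x := by
    exact hsin.const_sub 1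
  have hden : HasDerivAt (fun y => 1 + Real.sin y) (Real.cos x) x := by
    exact hsin.const_add 1
  have hden2 : HasDerivAt (fun y => 2 * Real.sin y) (2 * Real.cos x) x := by
    simpa using hsin.const_mul 2
  have hA : HasDerivAt (fun y => (1 - Real.sin y) / (2 * Real.sin y))
      ((-Real.cos x * (2 * s) - (1 - s) * (2 * Real.cos x)) / (2 * s)^2) x :=
    hnum.div hden2 h2s
  have hq : HasDerivAt (fun y => (1 - Real.sin y) / (1 + Real.sin y))
      ((-Real.cos x * (1 + s) - (1 - s) * Real.cos x) / (1 + s)^2) x :=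
    hnum.div hden hs1p.ne'
  have hqne : (1 - s) / (1 + s) ≠ 0 := div_ne_zero hs1' hs1p.ne'
  have hB : HasDerivAt (fun y => Real.log ((1 - Real.sin y) / (1 + Real.sin y)))
      (((-Real.cos x * (1 + s) - (1 - s) * Real.cos x) / (1 + s)^2) / ((1 - s) / (1 + s))) x :=
    hq.log hqne
  have hr : HasDerivAt (fun y => 2 * Real.sin y / (1 + Real.sin y))
      ((2 * Real.cos x * (1 + s) - 2 * s * Real.cos x) / (1 + s)^2) x :=
    hden2.div hden hs1p.ne'
  have hrne : 2 * s / (1 + s) ≠ 0 := div_ne_zero h2s hs1p.ne'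
  have hC : HasDerivAt (fun y => Real.log (2 * Real.sin y / (1 + Real.sin y)))
      (((2 * Real.cos x * (1 + s) - 2 * s * Real.cos x) / (1 + s)^2) / (2 * s / (1 + s))) x :=
    hr.log hrne
  have h := ((hA.neg.mul hB).sub hC)
  refine h.congr_deriv ?_
  simp only [Pi.neg_apply, ← hs]
  field_simp
  ring_nf

lemma psi_strictAntiOn : StrictAntiOn psi (Set.Ioo 0 (Real.pi / 2)) := by
  have key : ∀ x ∈ Set.Ioo (0:ℝ) (Real.pi / 2),
      0 < Real.sin x ∧ Real.sin x < 1 := by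
    intro x hx
    constructor
    · exact Real.sin_pos_of_pos_of_lt_pi hx.1 (hx.2.trans_le (by linarith [Real.pi_pos]))
    · have := Real.sin_lt_sin_of_lt_of_le_pi_div_two
        (by linarith [Real.pi_pos, hx.1]) (le_refl (Real.pi/2)) hx.2
      simpa using this
  apply strictAntiOn_of_deriv_neg (convex_Ioo _ _)
  · intro x hx
    obtain ⟨h0, h1⟩ := key x hx
    exact (hasDerivAt_psi h0 h1).continuousAt.continuousWithinAt
  · intro x hx
    rw [interior_Ioo] at hx
    obtain ⟨h0, h1⟩ := key x hx
    rw [(hasDerivAt_psi h0 h1).deriv]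
    have hc : 0 < Real.cos x := Real.cos_pos_of_mem_Ioo
      ⟨by linarith [hx.1, Real.pi_pos], hx.2⟩
    have hlog : Real.log ((1 - Real.sin x) / (1 + Real.sin x)) < 0 := by
      apply Real.log_neg
      · apply div_pos <;> linarith
      · rw [div_lt_one (by linarith)]; linarith
    have hden : 0 < 2 * Real.sin x ^ 2 := by positivity
    exact div_neg_of_neg_of_pos (mul_neg_of_pos_of_neg hc hlog) hden

/-- Let `a > 0` and `R₁ = ψ(θ_x)`. If `θ̄ ∈ (0, π/2)` satisfies `ψ(θ̄) = R₁`, then `θ̄ = θ_x`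
and `E₀(R₁,a) = E_U(R₁,a)`, i.e.
`(a/4)(1 − cos θ_x) + R_x − R₁ = (a/4)(1 − cos θ̄) − ln sin θ̄ − R₁`.
In particular `R_x = −ln sin θ_x`. -/
theorem gaussian_tangency (a R₁ θbar : ℝ) (ha : 0 < a) (hR₁ : R₁ = psi (thetax a))
    (hθ0 : 0 < θbar) (hθ1 : θbar < Real.pi / 2) (hψ : psi θbar = R₁) :
    θbar = thetax a ∧
    (a/4) * (1 - Real.cos (thetax a)) + Rx a - R₁
      = (a/4) * (1 - Real.cos θbar) - Real.log (Real.sin θbar) - R₁ ∧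
    Rx a = -Real.log (Real.sin (thetax a)) := by
  -- Rx a > 0
  have hsq : (1:ℝ) < Real.sqrt (1 + a^2/4) := by
    have : Real.sqrt 1 < Real.sqrt (1 + a^2/4) :=
      Real.sqrt_lt_sqrt (by norm_num) (by nlinarith)
    simpa using this
  have hRx : 0 < Rx a := by
    unfold Rx
    have : (1:ℝ) < 1/2 + 1/2 * Real.sqrt (1 + a^2/4) := by linarith
    have := Real.log_pos this
    linarith
  -- e := exp(-2 Rx a) ∈ (0,1)
  have he1 : Real.exp (-2 * Rx a) < 1 := by
    rw [Real.exp_lt_one_iff]; linarith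
  have he0 : 0 < Real.exp (-2 * Rx a) := Real.exp_pos _
  set t := Real.sqrt (1 - Real.exp (-2 * Rx a)) with ht
  have ht0 : 0 < t := Real.sqrt_pos.mpr (by linarith)
  have ht1 : t < 1 := by
    have : Real.sqrt (1 - Real.exp (-2 * Rx a)) < Real.sqrt 1 :=
      Real.sqrt_lt_sqrt (by linarith) (by linarith)
    simpa [ht] using this
  -- thetax a ∈ Ioo 0 (π/2)
  have hθx : thetax a ∈ Set.Ioo 0 (Real.pi / 2) := by
    constructor
    · exact Real.arccos_pos.mpr ht1
    · exact Real.arccos_lt_pi_div_two.mpr ht0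
  -- sin (thetax a) = exp (- Rx a)
  have hsin : Real.sin (thetax a) = Real.exp (-Rx a) := by
    rw [thetax, Real.sin_arccos]
    rw [Real.sq_sqrt (by linarith : (0:ℝ) ≤ 1 - Real.exp (-2 * Rx a))]
    have : (1:ℝ) - (1 - Real.exp (-2 * Rx a)) = Real.exp (-Rx a) ^ 2 := by
      rw [← Real.exp_nat_mul]
      ring_nf
    rw [this, Real.sqrt_sq (Real.exp_pos _).le]
  have hRx_log : Rx a = -Real.log (Real.sin (thetax a)) := by
    rw [hsin, Real.log_exp]; ring
  have hθeq : θbar = thetax a :=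
    psi_strictAntiOn.injOn ⟨hθ0, hθ1⟩ hθx (by rw [hψ, hR₁])
  refine ⟨hθeq, ?_, hRx_log⟩
  rw [hθeq, hRx_log]
  ring
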